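/- Let n ≥ 3 and let U = span⟨E₁₁ − E_nn⟩ + B_{n−1,2} ≤ sl_n(ℂ). Then there exist g₁, g₂ ∈ SL_n(ℂ) (one may take the flip F along the antidiagonal and the long cycle permutation matrix, adjusted to have determinant 1) such that U + g₁Ug₁⁻¹ + g₂Ug₂⁻¹ = sl_n(ℂ). -/

import Mathlib

/-- The Lie algebra `sl_n(ℂ)` of traceless matrices, as a subspace of `M_n(ℂ)`. -/
noncomputable def sln (n : ℕ) : Submodule ℂ (Matrix (Fin n) (Fin n) ℂ) :=
  LinearMap.ker (Matrix.traceLinearMap (Fin n) ℂ ℂ)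

/-- Conjugation by `g ∈ SL_n(ℂ)` as a linear map `x ↦ g x g⁻¹`. -/
noncomputable def slConj {n : ℕ} (g : Matrix.SpecialLinearGroup (Fin n) ℂ) :
    Matrix (Fin n) (Fin n) ℂ →ₗ[ℂ] Matrix (Fin n) (Fin n) ℂ where
  toFun x := (g : Matrix (Fin n) (Fin n) ℂ) * x * ((g⁻¹ : Matrix.SpecialLinearGroup (Fin n) ℂ) : Matrix (Fin n) (Fin n) ℂ)
  map_add' x y := by simp [Matrix.mul_add, Matrix.add_mul]
  map_smul' c x := by simp [Matrix.mul_smul, Matrix.smul_mul]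

/-- The subspace `B_{n−1,2} ∩ sl_n(ℂ)`: the span of those elementary matrices `E k ℓ`
(`1`-based indices) with `k ≤ n−1`, `ℓ ≥ 2`, intersected with the traceless matrices. -/
noncomputable def Bn12 (n : ℕ) : Submodule ℂ (Matrix (Fin n) (Fin n) ℂ) :=
  (Submodule.span ℂ
    {m : Matrix (Fin n) (Fin n) ℂ |
      ∃ k ℓ : Fin n, (k : ℕ) + 1 ≤ n - 1 ∧ 2 ≤ (ℓ : ℕ) + 1 ∧
        m = Matrix.single k ℓ 1}) ⊓ sln n

/-!
Take `g₁` to be the antidiagonal flip and `g₂` the transposition of the second and last basis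
vectors, each rescaled into `SL_n(ℂ)` by an `n`-th root of its determinant (a scalar does not
change the conjugation). An off-diagonal `E i j` lies in `B_{n−1,2}` unless `i = n` or `j = 1`,
and in that case the flip sends `E (n+1−i) (n+1−j) ∈ B_{n−1,2}` to it. On the diagonal,
`B_{n−1,2}` contains `E i i − E 2 2` for `2 ≤ i ≤ n − 1`, `U` contains `E 1 1 − E n n`,
and `g₂` sends the latter to `E 1 1 − E 2 2`; these span the traceless diagonal matrices.
-/

open Matrix

section Spanning

variable {ι R : Type*} [Fintype ι] [DecidableEq ι] [CommRing R]

theorem ker_trace_le_of_single_mem (S : Submodule R (Matrix ι ι R)) (z : ι)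
    (hoff : ∀ i j, i ≠ j → single i j (1 : R) ∈ S)
    (hdiag : ∀ i, single i i (1 : R) - single z z 1 ∈ S) :
    LinearMap.ker (traceLinearMap ι R R) ≤ S := by
  intro x hx
  have htr : ∑ i, x i i = 0 := hx
  set d := ∑ i, x i i • (single i i (1 : R) - single z z 1)
  have hd : d ∈ S := S.sum_mem fun i _ => S.smul_mem (x i i) (hdiag i)
  have hdiag_zero : ∀ a, (x - d) a a = 0 := fun a => by
    simp [d, Matrix.sum_apply, single_apply, mul_sub, Finset.sum_sub_distrib, htr]
  have hxd : x - d ∈ S := by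
    rw [matrix_eq_sum_single (x - d)]
    refine S.sum_mem fun i _ => S.sum_mem fun j _ => ?_
    obtain rfl | hij := eq_or_ne i j
    · simp [hdiag_zero]
    · simpa [smul_single] using S.smul_mem ((x - d) i j) (hoff i j hij)
  simpa using S.add_mem hxd hd

end Spanning

section Conjugation

variable {n : ℕ}

theorem slConj_eq_of_mul_eq {g : Matrix.SpecialLinearGroup (Fin n) ℂ}
    {x y : Matrix (Fin n) (Fin n) ℂ}
    (h : (g : Matrix (Fin n) (Fin n) ℂ) * x = y * (g : Matrix (Fin n) (Fin n) ℂ)) :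
    slConj g x = y := by
  have hg : (g : Matrix (Fin n) (Fin n) ℂ) *
      ((g⁻¹ : Matrix.SpecialLinearGroup (Fin n) ℂ) : Matrix (Fin n) (Fin n) ℂ) = 1 := by
    rw [← Matrix.SpecialLinearGroup.coe_mul, mul_inv_cancel, Matrix.SpecialLinearGroup.coe_one]
  change (g : Matrix (Fin n) (Fin n) ℂ) * x * _ = y
  rw [h, Matrix.mul_assoc, hg, Matrix.mul_one]

theorem trace_slConj (g : Matrix.SpecialLinearGroup (Fin n) ℂ) (x : Matrix (Fin n) (Fin n) ℂ) :
    trace (slConj g x) = trace x := by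
  have hg : ((g⁻¹ : Matrix.SpecialLinearGroup (Fin n) ℂ) : Matrix (Fin n) (Fin n) ℂ) *
      (g : Matrix (Fin n) (Fin n) ℂ) = 1 := by
    rw [← Matrix.SpecialLinearGroup.coe_mul, inv_mul_cancel, Matrix.SpecialLinearGroup.coe_one]
  change trace ((g : Matrix (Fin n) (Fin n) ℂ) * x * _) = _
  rw [trace_mul_cycle, hg, Matrix.one_mul]

theorem map_slConj_sln_le (g : Matrix.SpecialLinearGroup (Fin n) ℂ) :
    (sln n).map (slConj g) ≤ sln n := by
  rintro _ ⟨x, hx, rfl⟩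
  simpa [sln, trace_slConj] using hx

theorem exists_slConj_eq_of_mul_eq (hn : 0 < n) {A : Matrix (Fin n) (Fin n) ℂ}
    (hA : A.det ≠ 0) :
    ∃ g : Matrix.SpecialLinearGroup (Fin n) ℂ, ∀ x y, A * x = y * A → slConj g x = y := by
  obtain ⟨ζ, hζ⟩ := IsAlgClosed.exists_pow_nat_eq (A.det)⁻¹ hn
  have hdet : (ζ • A).det = 1 := by rw [det_smul, Fintype.card_fin, hζ, inv_mul_cancel₀ hA]
  refine ⟨⟨ζ • A, hdet⟩, fun x y h => slConj_eq_of_mul_eq ?_⟩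
  change (ζ • A) * x = y * (ζ • A)
  rw [Matrix.smul_mul, Matrix.mul_smul, h]

theorem exists_slConj_eq_submatrix (hn : 0 < n) (σ : Equiv.Perm (Fin n)) :
    ∃ g : Matrix.SpecialLinearGroup (Fin n) ℂ, ∀ x, slConj g x = x.submatrix σ σ := by
  have hσ : (σ.permMatrix ℂ).det ≠ 0 := by
    rcases Int.units_eq_one_or (Equiv.Perm.sign σ) with h | h <;> simp [h]
  obtain ⟨g, hg⟩ := exists_slConj_eq_of_mul_eq hn hσ
  refine ⟨g, fun x => hg _ _ ?_⟩
  rw [PEquiv.toMatrix_toPEquiv_mul, PEquiv.mul_toMatrix_toPEquiv, submatrix_submatrix]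
  simp

end Conjugation

section Bn12

variable {n : ℕ}

theorem single_mem_Bn12 {k l : Fin n} (hk : (k : ℕ) + 1 ≤ n - 1) (hl : 2 ≤ (l : ℕ) + 1)
    (hkl : k ≠ l) : single k l (1 : ℂ) ∈ Bn12 n :=
  ⟨Submodule.subset_span ⟨k, l, hk, hl, rfl⟩, trace_single_eq_of_ne k l 1 hkl⟩

theorem single_sub_single_mem_Bn12 {k l : Fin n} (hk : (k : ℕ) + 1 ≤ n - 1)
    (hk' : 2 ≤ (k : ℕ) + 1) (hl : (l : ℕ) + 1 ≤ n - 1) (hl' : 2 ≤ (l : ℕ) + 1) :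
    single k k (1 : ℂ) - single l l 1 ∈ Bn12 n := by
  refine ⟨Submodule.sub_mem _ (Submodule.subset_span ⟨k, k, hk, hk', rfl⟩)
    (Submodule.subset_span ⟨l, l, hl, hl', rfl⟩), ?_⟩
  simp [sln, trace_single_eq_same]

theorem single_mem_of_Bn12_le {S : Submodule ℂ (Matrix (Fin n) (Fin n) ℂ)}
    {g : Matrix.SpecialLinearGroup (Fin n) ℂ}
    (hg : ∀ x, slConj g x = x.submatrix Fin.revPerm Fin.revPerm)
    (hB : Bn12 n ≤ S) (hBg : (Bn12 n).map (slConj g) ≤ S) {i j : Fin n} (hij : i ≠ j) :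
    single i j (1 : ℂ) ∈ S := by
  have hij' : (i : ℕ) ≠ j := Fin.val_ne_of_ne hij
  by_cases h : (i : ℕ) + 1 ≤ n - 1 ∧ 2 ≤ (j : ℕ) + 1
  · exact hB (single_mem_Bn12 h.1 h.2 hij)
  · have hrev : single i.rev j.rev (1 : ℂ) ∈ Bn12 n := by
      refine single_mem_Bn12 ?_ ?_ (Fin.rev_injective.ne hij) <;> simp only [Fin.val_rev] <;> omega
    exact hBg ⟨_, hrev, by simp [hg]⟩

theorem single_sub_single_mem_of_Bn12_le (hn : 3 ≤ n)
    {S : Submodule ℂ (Matrix (Fin n) (Fin n) ℂ)} {z a e : Fin n}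
    (hz : (z : ℕ) = 0) (ha : (a : ℕ) = 1) (he : (e : ℕ) = n - 1) (hB : Bn12 n ≤ S)
    (hze : single z z (1 : ℂ) - single e e 1 ∈ S)
    (hza : single z z (1 : ℂ) - single a a 1 ∈ S)
    (i : Fin n) : single i i (1 : ℂ) - single z z 1 ∈ S := by
  by_cases hi : (i : ℕ) = 0 ∨ (i : ℕ) = n - 1
  · obtain rfl | rfl : i = z ∨ i = e := by simpa [Fin.ext_iff, hz, he] using hi
    · simp
    · simpa using S.neg_mem hze
  have hia := hB (single_sub_single_mem_Bn12 (k := i) (l := a) (by omega) (by omega)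
    (by omega) (by omega))
  simpa using S.sub_mem hia hza

end Bn12

theorem stmt_8 (n : ℕ) (hn : 3 ≤ n)
    (U : Submodule ℂ (Matrix (Fin n) (Fin n) ℂ))
    (hUdef : U = Submodule.span ℂ
        {Matrix.single (⟨0, by omega⟩ : Fin n) (⟨0, by omega⟩ : Fin n) (1 : ℂ) -
          Matrix.single (⟨n - 1, by omega⟩ : Fin n) (⟨n - 1, by omega⟩ : Fin n) 1} ⊔
      Bn12 n) :
    ∃ g₁ g₂ : Matrix.SpecialLinearGroup (Fin n) ℂ,
      U ⊔ Submodule.map (slConj g₁) U ⊔ Submodule.map (slConj g₂) U = sln n := by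
  set z : Fin n := ⟨0, by omega⟩
  set a : Fin n := ⟨1, by omega⟩
  set e : Fin n := ⟨n - 1, by omega⟩
  have hze : single z z (1 : ℂ) - single e e 1 ∈ U :=
    hUdef ▸ Submodule.mem_sup_left (Submodule.mem_span_singleton_self _)
  have hB : Bn12 n ≤ U := hUdef ▸ le_sup_right
  have hU : U ≤ sln n := hUdef ▸ sup_le ((Submodule.span_singleton_le_iff_mem _ _).2
    (by simp [sln, trace_single_eq_same])) inf_le_right
  obtain ⟨g₁, hg₁⟩ := exists_slConj_eq_submatrix (n := n) (by omega) Fin.revPerm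
  obtain ⟨g₂, hg₂⟩ := exists_slConj_eq_submatrix (n := n) (by omega) (Equiv.swap a e)
  refine ⟨g₁, g₂, le_antisymm ?_ ?_⟩
  · exact sup_le (sup_le hU ((Submodule.map_mono hU).trans (map_slConj_sln_le g₁)))
      ((Submodule.map_mono hU).trans (map_slConj_sln_le g₂))
  set S := U ⊔ U.map (slConj g₁) ⊔ U.map (slConj g₂)
  have h₀ : U ≤ S := le_sup_left.trans le_sup_left
  have h₁ : U.map (slConj g₁) ≤ S := le_sup_right.trans le_sup_left
  have h₂ : U.map (slConj g₂) ≤ S := le_sup_right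
  have hz : Equiv.swap a e z = z :=
    Equiv.swap_apply_of_ne_of_ne (by simp [z, a]) (by simp [z, e, Fin.ext_iff]; omega)
  have hza : single z z (1 : ℂ) - single a a 1 ∈ S :=
    h₂ ⟨_, hze, by simp [hg₂, submatrix_sub, hz]⟩
  exact ker_trace_le_of_single_mem S z
    (fun i j => single_mem_of_Bn12_le hg₁ (hB.trans h₀) ((Submodule.map_mono hB).trans h₁))
    (single_sub_single_mem_of_Bn12_le hn rfl rfl rfl (hB.trans h₀) (h₀ hze) hza)
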